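/- arXiv:1703.01981 — 2 statements merged into one kernel-verified Lean document; each statement's English description precedes it below -/
import Mathlib

section
/- Let N, n ≥ 1, p > 1, ε > 0, δ > 0 with ε ≤ δ/2, and let g^ε_{ξ_1,…,ξ_n} : ℝ → [0,∞) satisfy g^ε_{ξ_1,…,ξ_n}(t) ≤ C_{ξ_1,…,ξ_n}(|t|^{p/n} + 1) with ∑ C_{ξ_1,…,ξ_n} < ∞, and define φ^ε(z) = ∑_{ξ_1,…,ξ_n ∈ ℤ^N} g^ε_{ξ_1,…,ξ_n}(det(D^{ξ_1}_ε z(0), …, D^{ξ_n}_ε z(0))) + ∑_{m=1}^N |D^{e_m}_ε z(0)|^p for z : εℤ^N → ℝ^n. If z, w : εℤ^N → ℝ^n satisfy z(j) = w(j) for all j ∈ εℤ^N with |j|_∞ ≤ δ/2, then φ^ε(z) ≤ φ^ε(w) + ∑_{(ξ_1,…,ξ_n) : ε|ξ_l|_∞ > δ/2 for some l} C_{ξ_1,…,ξ_n} ((1/n) ∑_{l=1}^n |D^{ξ_l}_ε z(0)|^p + 1); in particular the discrete-determinant densities satisfy the vanishing non-locality property (H4). -/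
open scoped ENNReal Classical

/-!
Let `ξ = (ξ₁, …, ξₙ)` be a tuple of directions. If every `ξ_l` is short (`ε|ξ_l|_∞ ≤ δ/2`), the
difference quotients `D^{ξ_l}_ε z(0)` only see values of `z` where it agrees with `w`, so the
`ξ`-terms of `φ^ε(z)` and `φ^ε(w)` coincide; this includes the nearest-neighbour part, as
`ε ≤ δ/2`. For the remaining tuples we drop the `w`-term and bound the `z`-term through the growth
of `g` together with Hadamard's inequality and AM–GM:
`|det(v₁, …, vₙ)|^{p/n} ≤ (∏ ‖v_l‖^p)^{1/n} ≤ (1/n) ∑ ‖v_l‖^p`.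
-/

/-- Euclidean norm of an integer vector. -/
noncomputable def zEuclNorm {N : ℕ} (ξ : Fin N → ℤ) : ℝ :=
  Real.sqrt (∑ l, ((ξ l : ℝ)) ^ 2)

/-- Sup norm of an integer vector, as a real number. -/
noncomputable def zSupNorm {N : ℕ} (ξ : Fin N → ℤ) : ℝ :=
  ((Finset.univ.sup fun l => (ξ l).natAbs : ℕ) : ℝ)

/-- Discrete difference quotient `D^ξ_ε u` (the lattice point `j` stands for `εj`). -/
noncomputable def DquotS {N : ℕ} {E : Type*} [AddCommGroup E] [Module ℝ E]
    (ε : ℝ) (ξ : Fin N → ℤ) (u : (Fin N → ℤ) → E) (j : Fin N → ℤ) : E :=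
  (ε * zEuclNorm ξ)⁻¹ • (u (j + ξ) - u j)

/-- The discrete-determinant multibody energy density (value in `[0,∞]`). -/
noncomputable def detDensity {N n : ℕ} (p : ℝ)
    (g : (Fin n → (Fin N → ℤ)) → ℝ → ℝ) (ε : ℝ)
    (z : (Fin N → ℤ) → EuclideanSpace ℝ (Fin n)) : ℝ≥0∞ :=
  (∑' ξt : Fin n → (Fin N → ℤ),
    ENNReal.ofReal (g ξt
      (Matrix.det (Matrix.of fun a l : Fin n =>
        (EuclideanSpace.equiv (Fin n) ℝ) (DquotS ε (ξt l) z 0) a)))) +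
  ∑ m : Fin N, ENNReal.ofReal (‖DquotS ε (Pi.single m 1) z 0‖ ^ p)

theorem OrthonormalBasis.abs_det_le_prod_norm {E : Type*} [NormedAddCommGroup E]
    [InnerProductSpace ℝ E] {n : ℕ} (b : OrthonormalBasis (Fin n) ℝ E) (v : Fin n → E) :
    |b.toBasis.det v| ≤ ∏ i, ‖v i‖ := by
  have : Fact (Module.finrank ℝ E = n) := ⟨by simpa using Module.finrank_eq_card_basis b.toBasis⟩
  rw [← b.toBasis.orientation.volumeForm_robust' b v]
  exact b.toBasis.orientation.abs_volumeForm_apply_le v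

theorem abs_det_of_columns_le_prod_norm {n : ℕ} (v : Fin n → EuclideanSpace ℝ (Fin n)) :
    |Matrix.det (Matrix.of fun a l : Fin n => v l a)| ≤ ∏ l, ‖v l‖ :=
  (EuclideanSpace.basisFun (Fin n) ℝ).abs_det_le_prod_norm v

theorem prod_rpow_div_card_le_mean_rpow {n : ℕ} (hn : 0 < n) (p : ℝ)
    (a : Fin n → ℝ) (ha : ∀ l, 0 ≤ a l) :
    (∏ l, a l) ^ (p / n) ≤ (1 / n) * ∑ l, a l ^ p := by
  have hmean : ∏ l, (a l ^ p) ^ (1 / (n : ℝ)) ≤ ∑ l, (1 / (n : ℝ)) * a l ^ p := by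
    refine Real.geom_mean_le_arith_mean_weighted Finset.univ _ _ (fun _ _ => by positivity)
      ?_ (fun l _ => Real.rpow_nonneg (ha l) p)
    simp only [one_div, Finset.sum_const, Finset.card_univ, Fintype.card_fin, nsmul_eq_mul]
    field_simp
  calc (∏ l, a l) ^ (p / n) = ∏ l, (a l ^ p) ^ (1 / (n : ℝ)) := by
        rw [← Real.finsetProd_rpow _ _ fun l _ => ha l]
        exact Finset.prod_congr rfl fun l _ => by rw [← Real.rpow_mul (ha l), mul_one_div]
    _ ≤ (1 / n) * ∑ l, a l ^ p := by rwa [Finset.mul_sum]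

theorem abs_det_of_columns_rpow_le_mean_norm_rpow {n : ℕ} (hn : 0 < n) {p : ℝ} (hp : 0 ≤ p)
    (v : Fin n → EuclideanSpace ℝ (Fin n)) :
    |Matrix.det (Matrix.of fun a l : Fin n => v l a)| ^ (p / n) ≤ (1 / n) * ∑ l, ‖v l‖ ^ p :=
  (Real.rpow_le_rpow (abs_nonneg _) (abs_det_of_columns_le_prod_norm v) (by positivity)).trans
    (prod_rpow_div_card_le_mean_rpow hn p _ fun l => norm_nonneg _)

theorem abs_le_zSupNorm {N : ℕ} (ξ : Fin N → ℤ) (l : Fin N) : |(ξ l : ℝ)| ≤ zSupNorm ξ := by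
  rw [zSupNorm, ← Int.cast_abs, Int.abs_eq_natAbs]
  exact_mod_cast Finset.le_sup (f := fun l => (ξ l).natAbs) (Finset.mem_univ l)

theorem zSupNorm_single_le_one {N : ℕ} (m : Fin N) : zSupNorm (Pi.single m 1 : Fin N → ℤ) ≤ 1 := by
  rw [zSupNorm, Nat.cast_le_one]
  refine Finset.sup_le fun l _ => ?_
  by_cases h : l = m <;> simp [h]

theorem DquotS_zero_eq_of_eqOn_box {N : ℕ} {E : Type*} [AddCommGroup E] [Module ℝ E]
    {ε r : ℝ} (hε : 0 < ε) {z w : (Fin N → ℤ) → E}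
    (hzw : ∀ j : Fin N → ℤ, (∀ l, |ε * (j l : ℝ)| ≤ r) → z j = w j)
    {ξ : Fin N → ℤ} (hξ : ε * zSupNorm ξ ≤ r) : DquotS ε ξ z 0 = DquotS ε ξ w 0 := by
  have hbox : ∀ l, |ε * (ξ l : ℝ)| ≤ r := fun l => by
    rw [abs_mul, abs_of_pos hε]
    exact (mul_le_mul_of_nonneg_left (abs_le_zSupNorm ξ l) hε.le).trans hξ
  have hr : 0 ≤ r := (mul_nonneg hε.le (Nat.cast_nonneg _)).trans hξ
  rw [DquotS, DquotS, hzw 0 (fun _ => by simpa using hr), hzw (0 + ξ) (by simpa using hbox)]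

noncomputable def discreteDet {N n : ℕ} (ε : ℝ) (ξt : Fin n → (Fin N → ℤ))
    (z : (Fin N → ℤ) → EuclideanSpace ℝ (Fin n)) : ℝ :=
  Matrix.det (Matrix.of fun a l : Fin n => (EuclideanSpace.equiv (Fin n) ℝ) (DquotS ε (ξt l) z 0) a)

theorem discreteDet_eq_of_eqOn_box {N n : ℕ} {ε r : ℝ} (hε : 0 < ε)
    {z w : (Fin N → ℤ) → EuclideanSpace ℝ (Fin n)}
    (hzw : ∀ j : Fin N → ℤ, (∀ l, |ε * (j l : ℝ)| ≤ r) → z j = w j)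
    {ξt : Fin n → (Fin N → ℤ)} (hξt : ∀ l, ε * zSupNorm (ξt l) ≤ r) :
    discreteDet ε ξt z = discreteDet ε ξt w := by
  simp only [discreteDet, DquotS_zero_eq_of_eqOn_box hε hzw (hξt _)]

theorem abs_discreteDet_rpow_le {N n : ℕ} (hn : 0 < n) {p : ℝ} (hp : 0 ≤ p) (ε : ℝ)
    (ξt : Fin n → (Fin N → ℤ)) (z : (Fin N → ℤ) → EuclideanSpace ℝ (Fin n)) :
    |discreteDet ε ξt z| ^ (p / n) ≤ (1 / n) * ∑ l, ‖DquotS ε (ξt l) z 0‖ ^ p :=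
  abs_det_of_columns_rpow_le_mean_norm_rpow hn hp fun l => DquotS ε (ξt l) z 0

theorem detDensity_vanishing_nonlocality_general {N n : ℕ} (hn : 0 < n)
    (p ε δ : ℝ) (hp : 1 < p) (hε : 0 < ε) (hεδ : ε ≤ δ / 2)
    (g : (Fin n → (Fin N → ℤ)) → ℝ → ℝ) (C : (Fin n → (Fin N → ℤ)) → ℝ)
    (hC : ∀ ξt, 0 ≤ C ξt)
    (hgrowth : ∀ ξt t, g ξt t ≤ C ξt * (|t| ^ (p / n) + 1))
    (z w : (Fin N → ℤ) → EuclideanSpace ℝ (Fin n))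
    (hzw : ∀ j : Fin N → ℤ, (∀ l, |ε * (j l : ℝ)| ≤ δ / 2) → z j = w j) :
    detDensity p g ε z ≤
      detDensity p g ε w +
        ∑' ξt : Fin n → (Fin N → ℤ),
          (if ∃ l, δ / 2 < ε * zSupNorm (ξt l) then
            ENNReal.ofReal (C ξt *
              ((1 / n) * ∑ l : Fin n, ‖DquotS ε (ξt l) z 0‖ ^ p + 1))
          else 0) := by
  set bound : (Fin n → (Fin N → ℤ)) → ℝ≥0∞ := fun ξt =>
    if ∃ l, δ / 2 < ε * zSupNorm (ξt l) then
      ENNReal.ofReal (C ξt * ((1 / n) * ∑ l : Fin n, ‖DquotS ε (ξt l) z 0‖ ^ p + 1))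
    else 0
  have hnearest : ∀ m : Fin N,
      DquotS ε (Pi.single m 1) z 0 = DquotS ε (Pi.single m 1) w 0 := fun m =>
    DquotS_zero_eq_of_eqOn_box hε hzw
      ((mul_le_of_le_one_right hε.le (zSupNorm_single_le_one m)).trans hεδ)
  have hterm : ∀ ξt, ENNReal.ofReal (g ξt (discreteDet ε ξt z)) ≤
      ENNReal.ofReal (g ξt (discreteDet ε ξt w)) + bound ξt := by
    intro ξt
    by_cases hlong : ∃ l, δ / 2 < ε * zSupNorm (ξt l)
    · simp only [bound, if_pos hlong]
      refine le_add_left (ENNReal.ofReal_le_ofReal ((hgrowth _ _).trans ?_))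
      have := abs_discreteDet_rpow_le hn (zero_lt_one.trans hp).le ε ξt z
      exact mul_le_mul_of_nonneg_left (by linarith) (hC ξt)
    · push Not at hlong
      rw [discreteDet_eq_of_eqOn_box hε hzw hlong]
      exact le_self_add
  simp only [detDensity, hnearest]
  rw [add_right_comm, ← ENNReal.tsum_add]
  gcongr with ξt
  exact hterm ξt

theorem detDensity_vanishing_nonlocality {N n : ℕ} (hN : 0 < N) (hn : 0 < n)
    (p ε δ : ℝ) (hp : 1 < p) (hε : 0 < ε) (hδ : 0 < δ) (hεδ : ε ≤ δ / 2)
    (g : (Fin n → (Fin N → ℤ)) → ℝ → ℝ) (C : (Fin n → (Fin N → ℤ)) → ℝ)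
    (hg0 : ∀ ξt t, 0 ≤ g ξt t) (hC : ∀ ξt, 0 ≤ C ξt)
    (hgrowth : ∀ ξt t, g ξt t ≤ C ξt * (|t| ^ (p / n) + 1))
    (hS : Summable C)
    (z w : (Fin N → ℤ) → EuclideanSpace ℝ (Fin n))
    (hzw : ∀ j : Fin N → ℤ, (∀ l, |ε * (j l : ℝ)| ≤ δ / 2) → z j = w j) :
    detDensity p g ε z ≤
      detDensity p g ε w +
        ∑' ξt : Fin n → (Fin N → ℤ),
          (if ∃ l, δ / 2 < ε * zSupNorm (ξt l) then
            ENNReal.ofReal (C ξt *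
              ((1 / n) * ∑ l : Fin n, ‖DquotS ε (ξt l) z 0‖ ^ p + 1))
          else 0) :=
  detDensity_vanishing_nonlocality_general hn p ε δ hp hε hεδ g C hC hgrowth z w hzw
end

section
/- Let V(r) = r^{−12} − 2r^{−6} for r > 0 (the normalized Lennard-Jones potential), so that V''(r) = 156 r^{−14} − 84 r^{−8}. Then the series ∑_{k=2}^∞ V''(k)(3k² − 3k + 1) converges absolutely, and −12 V''(√2) − 3 ∑_{k=2}^∞ V''(k)(3k² − 3k + 1) < V''(1). -/
/-!
Every long-range term `V''(k)(3k² - 3k + 1)`, `k ≥ 2`, is at most `84 k⁻⁸ · 3k² ≤ 63 k⁻⁴` in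
absolute value, so the series is dominated by `63 (ζ(4) - 1) = 63 (π⁴/90 - 1)`. With
`V''(1) = 72` and `V''(√2) = -129/32` the inequality reduces to `π⁴ < 405/4`, which follows
from `π < 3.15`.
-/

noncomputable def LJpot (r : ℝ) : ℝ := r ^ (-12 : ℤ) - 2 * r ^ (-6 : ℤ)

open Real

theorem hasDerivAt_const_mul_zpow_add_const_mul_zpow (a b : ℝ) (m n : ℤ) {x : ℝ}
    (hx : x ≠ 0) :
    HasDerivAt (fun y => a * y ^ m + b * y ^ n)
      (a * m * x ^ (m - 1) + b * n * x ^ (n - 1)) x :=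
  (((hasDerivAt_zpow m x (.inl hx)).const_mul a).add
    ((hasDerivAt_zpow n x (.inl hx)).const_mul b)).congr_deriv (by ring)

theorem deriv_LJpot {r : ℝ} (hr : r ≠ 0) :
    deriv LJpot r = -12 * r ^ (-13 : ℤ) + 12 * r ^ (-7 : ℤ) := by
  have hLJ : LJpot = fun y => 1 * y ^ (-12 : ℤ) + (-2) * y ^ (-6 : ℤ) := by
    ext y
    simp only [LJpot]
    ring
  rw [hLJ, (hasDerivAt_const_mul_zpow_add_const_mul_zpow _ _ _ _ hr).deriv]
  norm_num

theorem deriv_deriv_LJpot {r : ℝ} (hr : r ≠ 0) :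
    deriv (deriv LJpot) r = 156 * r ^ (-14 : ℤ) - 84 * r ^ (-8 : ℤ) := by
  have hev : deriv LJpot =ᶠ[nhds r] fun x => -12 * x ^ (-13 : ℤ) + 12 * x ^ (-7 : ℤ) :=
    Filter.eventually_of_mem (isOpen_ne.mem_nhds hr) fun x hx => deriv_LJpot hx
  rw [hev.deriv_eq, (hasDerivAt_const_mul_zpow_add_const_mul_zpow _ _ _ _ hr).deriv]
  norm_num
  ring

theorem deriv_deriv_LJpot_one : deriv (deriv LJpot) 1 = 72 := by
  rw [deriv_deriv_LJpot one_ne_zero]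
  norm_num

theorem deriv_deriv_LJpot_sqrt_two : deriv (deriv LJpot) √2 = -129 / 32 := by
  have hsq : √2 ^ (2 : ℤ) = 2 := by simp
  rw [deriv_deriv_LJpot (by positivity), show (-14 : ℤ) = 2 * -7 by norm_num,
    show (-8 : ℤ) = 2 * -4 by norm_num, zpow_mul, zpow_mul, hsq]
  norm_num

theorem abs_deriv_deriv_LJpot_le {r : ℝ} (hr : 1 ≤ r) :
    |deriv (deriv LJpot) r| ≤ 84 / r ^ 8 := by
  rw [deriv_deriv_LJpot (by positivity), abs_le]
  simp only [zpow_neg, zpow_ofNat, ← div_eq_mul_inv]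
  have hpos : 0 ≤ 156 / r ^ 14 := by positivity
  have hle : 156 / r ^ 14 ≤ 2 * (84 / r ^ 8) := by
    rw [div_le_iff₀ (by positivity), show r ^ 14 = r ^ 8 * r ^ 6 by ring]
    field_simp
    nlinarith [one_le_pow₀ (n := 6) hr]
  constructor <;> linarith

theorem abs_deriv_deriv_LJpot_mul_le {r : ℝ} (hr : 2 ≤ r) :
    |deriv (deriv LJpot) r * (3 * r ^ 2 - 3 * r + 1)| ≤ 63 / r ^ 4 := by
  calc |deriv (deriv LJpot) r * (3 * r ^ 2 - 3 * r + 1)|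
      = |deriv (deriv LJpot) r| * (3 * r ^ 2 - 3 * r + 1) := by
        rw [abs_mul, abs_of_nonneg (a := 3 * r ^ 2 - 3 * r + 1) (by nlinarith)]
    _ ≤ 84 / r ^ 8 * (3 * r ^ 2) :=
        mul_le_mul (abs_deriv_deriv_LJpot_le (by linarith)) (by nlinarith)
          (by nlinarith) (by positivity)
    _ = 63 / r ^ 4 * (4 / r ^ 2) := by
        field_simp
        ring
    _ ≤ 63 / r ^ 4 := by
        refine mul_le_of_le_one_right (by positivity) ?_
        rw [div_le_one (by positivity)]
        nlinarith

theorem hasSum_one_div_nat_add_two_pow_four :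
    HasSum (fun k : ℕ => 1 / ((k : ℝ) + 2) ^ 4) (π ^ 4 / 90 - 1) := by
  simpa [Finset.sum_range_succ] using (hasSum_nat_add_iff' 2).2 hasSum_zeta_four

theorem pi_pow_four_lt : π ^ 4 < 405 / 4 :=
  calc π ^ 4 < 3.15 ^ 4 := by gcongr; exact pi_lt_d2
    _ < 405 / 4 := by norm_num

theorem lennardJones_coercivity :
    (∀ r : ℝ, 0 < r →
      deriv (deriv LJpot) r = 156 * r ^ (-14 : ℤ) - 84 * r ^ (-8 : ℤ)) ∧
    (Summable fun k : ℕ =>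
      |deriv (deriv LJpot) ((k : ℝ) + 2) * (3 * ((k : ℝ) + 2) ^ 2 - 3 * ((k : ℝ) + 2) + 1)|) ∧
    -12 * deriv (deriv LJpot) (Real.sqrt 2) -
        3 * ∑' k : ℕ,
          deriv (deriv LJpot) ((k : ℝ) + 2) * (3 * ((k : ℝ) + 2) ^ 2 - 3 * ((k : ℝ) + 2) + 1)
      < deriv (deriv LJpot) 1 := by
  set F : ℕ → ℝ := fun k =>
    deriv (deriv LJpot) ((k : ℝ) + 2) * (3 * ((k : ℝ) + 2) ^ 2 - 3 * ((k : ℝ) + 2) + 1)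
  have hdom := hasSum_one_div_nat_add_two_pow_four.mul_left 63
  have hF : ∀ k, |F k| ≤ 63 * (1 / ((k : ℝ) + 2) ^ 4) := fun k => by
    simpa only [mul_one_div] using
      abs_deriv_deriv_LJpot_mul_le (le_add_of_nonneg_left k.cast_nonneg)
  have hsum : |∑' k, F k| ≤ 63 * (π ^ 4 / 90 - 1) := by
    simpa only [Real.norm_eq_abs] using tsum_of_norm_bounded (f := F) hdom hF
  refine ⟨fun r hr => deriv_deriv_LJpot hr.ne',
    .of_nonneg_of_le (fun _ => abs_nonneg _) hF hdom.summable, ?_⟩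
  rw [deriv_deriv_LJpot_one, deriv_deriv_LJpot_sqrt_two]
  linarith [neg_abs_le (∑' k, F k), pi_pow_four_lt]
end
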